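/- arXiv:1905.06473 — 2 statements merged into one kernel-verified Lean document; each statement's English description precedes it below -/
import Mathlib

section
/- If f is a closed relation on a compact Hausdorff space X and U is a closed subset of X that is eventually confining for f (there exists N with fⁿ(U) ⊆ U for all n ≥ N), then the strict omega limit set equals the omega limit set: ω̂(U;f) = ω(U;f). -/
open Set

/-- The image of a set `S` under a relation `f ⊆ X × X`. -/
def RelImage {X : Type*} (f : Set (X × X)) (S : Set X) : Set X :=
  {y | ∃ x ∈ S, (x, y) ∈ f}

/-- The strict omega limit set of `S` under the relation `f`. -/
def strictOmegaRel {X : Type*} [TopologicalSpace X] (f : Set (X × X)) (S : Set X) : Set X :=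
  ⋂ m : ℕ, closure (⋃ n ∈ Ici m, (RelImage f)^[n] S)

/-- The collection `𝔎(S;f)` of closed confining sets containing some forward image of `S`. -/
def KSetRel {X : Type*} [TopologicalSpace X] (f : Set (X × X)) (S : Set X) : Set (Set X) :=
  {K | IsClosed K ∧ RelImage f K ⊆ K ∧ ∃ n : ℕ, (RelImage f)^[n] S ⊆ K}

/-- The omega limit set of `S` under the relation `f`. -/
def omegaRel {X : Type*} [TopologicalSpace X] (f : Set (X × X)) (S : Set X) : Set X :=
  ⋂₀ KSetRel f S

/-!
The inclusion `ω̂(U) ⊆ ω(U)` is formal: every `K ∈ 𝔎(U)` contains a whole tail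
`⋃_{n ≥ m} fⁿ(U)`, hence its closure. For the converse, write `Cₘ` for the closure of that tail.
For `M ≥ N` the set `⋃_{j ≤ M} fʲ(C_M)` lies in `𝔎(U)`, since `f^{M+1}(C_M) ⊆ f^{M+1}(U) ⊆ C_M`.
So a point `x ∈ ω(U)` outside `Cₚ` lies, for every large `M`, in `fʲ(C_M)` for some `j < p`
(for `j ≥ p`, `fʲ(C_M) ⊆ fʲ(U) ⊆ Cₚ`), and by pigeonhole one `j` works for all `M`.
Compactness lets `fʲ` commute with the decreasing intersection, giving `x ∈ fʲ(ω̂(U))`,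
and `ω̂(U)` is forward invariant (confinement puts it inside every tail itself, not only its
closure), so `x ∈ ω̂(U) ⊆ Cₚ`.
-/

open Filter

section

variable {X : Type*}

theorem relImage_monotone (f : Set (X × X)) : Monotone (RelImage f) :=
  SetRel.image_mono

theorem iterate_relImage_monotone (f : Set (X × X)) (j : ℕ) : Monotone (RelImage f)^[j] :=
  (relImage_monotone f).iterate j

theorem iterate_relImage_subset_of_le {f : Set (X × X)} {S K : Set X}
    (hK : RelImage f K ⊆ K) {n₀ n : ℕ} (hS : (RelImage f)^[n₀] S ⊆ K) (hn : n₀ ≤ n) :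
    (RelImage f)^[n] S ⊆ K := by
  induction n, hn using Nat.le_induction with
  | base => exact hS
  | succ n _ ih =>
    rw [Function.iterate_succ_apply']
    exact (relImage_monotone f ih).trans hK

theorem relImage_biUnion_iterate_subset {f : Set (X × X)} {C : Set X} {k : ℕ}
    (hC : (RelImage f)^[k + 1] C ⊆ C) :
    RelImage f (⋃ j ≤ k, (RelImage f)^[j] C) ⊆ ⋃ j ≤ k, (RelImage f)^[j] C := by
  rintro y ⟨x, hx, hxy⟩
  obtain ⟨j, hjk, hxj⟩ := mem_iUnion₂.1 hx
  have hy : y ∈ (RelImage f)^[j + 1] C := by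
    rw [Function.iterate_succ_apply']
    exact ⟨x, hxj, hxy⟩
  rcases Nat.lt_or_eq_of_le hjk with hjk | rfl
  · exact mem_iUnion₂.2 ⟨j + 1, hjk, hy⟩
  · exact mem_iUnion₂.2 ⟨0, Nat.zero_le _, hC hy⟩

theorem mem_iInter_of_frequently_of_antitone {α : Type*} {A : ℕ → Set α} (hA : Antitone A)
    {x : α} (h : ∃ᶠ M in atTop, x ∈ A M) : x ∈ ⋂ M, A M :=
  mem_iInter.2 fun m ↦
    let ⟨_, hmM, hx⟩ := frequently_atTop.1 h m
    hA hmM hx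

def orbitTail (f : Set (X × X)) (S : Set X) (m : ℕ) : Set X :=
  ⋃ n ∈ Ici m, (RelImage f)^[n] S

section orbitTail

variable {f : Set (X × X)} {S : Set X}

theorem iterate_relImage_subset_orbitTail {m n : ℕ} (h : m ≤ n) :
    (RelImage f)^[n] S ⊆ orbitTail f S m :=
  subset_biUnion_of_mem (u := fun n ↦ (RelImage f)^[n] S) (mem_Ici.2 h)

theorem orbitTail_subset {m : ℕ} {K : Set X} (h : ∀ n, m ≤ n → (RelImage f)^[n] S ⊆ K) :
    orbitTail f S m ⊆ K :=
  iUnion₂_subset h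

theorem orbitTail_antitone : Antitone (orbitTail f S) :=
  fun _ _ hab ↦ orbitTail_subset fun _ hn ↦ iterate_relImage_subset_orbitTail (hab.trans hn)

theorem relImage_orbitTail (m : ℕ) : RelImage f (orbitTail f S m) = orbitTail f S (m + 1) := by
  apply Subset.antisymm
  · rintro y ⟨x, hx, hxy⟩
    obtain ⟨n, hn, hxn⟩ := mem_iUnion₂.1 hx
    refine iterate_relImage_subset_orbitTail (Nat.succ_le_succ (mem_Ici.1 hn)) ?_
    rw [Function.iterate_succ_apply']
    exact ⟨x, hxn, hxy⟩
  · refine orbitTail_subset fun n hn ↦ ?_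
    obtain ⟨k, rfl⟩ := Nat.exists_eq_add_of_le' (Nat.one_le_of_lt hn)
    rw [Function.iterate_succ_apply']
    exact relImage_monotone f (iterate_relImage_subset_orbitTail (Nat.le_of_succ_le_succ hn))

variable [TopologicalSpace X]

theorem strictOmegaRel_subset_omegaRel : strictOmegaRel f S ⊆ omegaRel f S := by
  intro x hx
  refine mem_sInter.2 fun K ⟨hKcl, hKinv, n₀, hn₀⟩ ↦ ?_
  have hTail : orbitTail f S n₀ ⊆ K :=
    orbitTail_subset fun _ hn ↦ iterate_relImage_subset_of_le hKinv hn₀ hn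
  exact closure_minimal hTail hKcl (mem_iInter.1 hx n₀)

end orbitTail

section Compact

variable [TopologicalSpace X] [CompactSpace X] {f : Set (X × X)}

theorem isClosed_relImage (hf : IsClosed f) {C : Set X} (hC : IsClosed C) :
    IsClosed (RelImage f C) := by
  have h : RelImage f C = Prod.snd '' (f ∩ C ×ˢ univ) := by
    ext y
    constructor
    · rintro ⟨x, hx, hxy⟩
      exact ⟨(x, y), ⟨hxy, hx, trivial⟩, rfl⟩
    · rintro ⟨⟨x, y⟩, ⟨hxy, hx, -⟩, rfl⟩
      exact ⟨x, hx, hxy⟩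
  rw [h]
  exact isClosedMap_snd_of_compactSpace _ (hf.inter (hC.prod isClosed_univ))

theorem isClosed_iterate_relImage (hf : IsClosed f) (j : ℕ) {C : Set X} (hC : IsClosed C) :
    IsClosed ((RelImage f)^[j] C) := by
  induction j with
  | zero => exact hC
  | succ j ih =>
    rw [Function.iterate_succ_apply']
    exact isClosed_relImage hf ih

theorem iInter_relImage_subset (hf : IsClosed f) {C : ℕ → Set X} (hC : Antitone C)
    (hCcl : ∀ m, IsClosed (C m)) : ⋂ m, RelImage f (C m) ⊆ RelImage f (⋂ m, C m) := by
  intro y hy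
  let D m := C m ∩ {x | (x, y) ∈ f}
  have hDcl m : IsClosed (D m) :=
    (hCcl m).inter (hf.preimage (continuous_id.prodMk continuous_const))
  have hDne m : (D m).Nonempty := by
    obtain ⟨x, hx, hxy⟩ := mem_iInter.1 hy m
    exact ⟨x, hx, hxy⟩
  obtain ⟨x, hx⟩ := IsCompact.nonempty_iInter_of_sequence_nonempty_isCompact_isClosed D
    (fun m ↦ inter_subset_inter_left _ (hC (Nat.le_succ m))) hDne (hDcl 0).isCompact hDcl
  exact ⟨x, mem_iInter.2 fun m ↦ (mem_iInter.1 hx m).1, (mem_iInter.1 hx 0).2⟩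

theorem iInter_iterate_relImage_subset (hf : IsClosed f) (j : ℕ) {C : ℕ → Set X}
    (hC : Antitone C) (hCcl : ∀ m, IsClosed (C m)) :
    ⋂ m, (RelImage f)^[j] (C m) ⊆ (RelImage f)^[j] (⋂ m, C m) := by
  induction j with
  | zero => exact Subset.rfl
  | succ j ih =>
    simp only [Function.iterate_succ_apply']
    exact (iInter_relImage_subset hf (fun _ _ h ↦ iterate_relImage_monotone f j (hC h))
      fun m ↦ isClosed_iterate_relImage hf j (hCcl m)).trans (relImage_monotone f ih)

theorem closure_orbitTail_add_subset (hf : IsClosed f) (S : Set X) (m j : ℕ) :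
    closure (orbitTail f S (m + j)) ⊆ (RelImage f)^[j] (closure (orbitTail f S m)) := by
  induction j with
  | zero => exact Subset.rfl
  | succ j ih =>
    rw [Function.iterate_succ_apply', ← add_assoc]
    refine closure_minimal ?_ (isClosed_relImage hf (isClosed_iterate_relImage hf j
      isClosed_closure))
    rw [← relImage_orbitTail]
    exact relImage_monotone f (subset_closure.trans ih)

end Compact

section Confining

variable [TopologicalSpace X] {f : Set (X × X)} {U : Set X} {N : ℕ}

theorem closure_orbitTail_subset (hU : IsClosed U) (hN : ∀ n, N ≤ n → (RelImage f)^[n] U ⊆ U)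
    {m : ℕ} (hm : N ≤ m) : closure (orbitTail f U m) ⊆ U :=
  closure_minimal (orbitTail_subset fun n hn ↦ hN n (hm.trans hn)) hU

theorem biUnion_iterate_closure_orbitTail_mem_kSetRel (hf : IsClosed f) [CompactSpace X]
    (hU : IsClosed U) (hN : ∀ n, N ≤ n → (RelImage f)^[n] U ⊆ U) {M : ℕ} (hM : N ≤ M) :
    ⋃ j ≤ M, (RelImage f)^[j] (closure (orbitTail f U M)) ∈ KSetRel f U := by
  have hTail : (RelImage f)^[M] U ⊆ closure (orbitTail f U M) :=
    (iterate_relImage_subset_orbitTail le_rfl).trans subset_closure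
  refine ⟨(finite_Iic M).isClosed_biUnion fun j _ ↦ isClosed_iterate_relImage hf j
    isClosed_closure, relImage_biUnion_iterate_subset ?_, M, hTail.trans ?_⟩
  · exact (iterate_relImage_monotone f _ (closure_orbitTail_subset hU hN hM)).trans
      ((iterate_relImage_subset_orbitTail (Nat.le_succ M)).trans subset_closure)
  · exact subset_biUnion_of_mem (u := fun j ↦ (RelImage f)^[j] _) (mem_Iic.2 (Nat.zero_le M))

variable [CompactSpace X]

theorem strictOmegaRel_subset_orbitTail (hf : IsClosed f) (hU : IsClosed U)
    (hN : ∀ n, N ≤ n → (RelImage f)^[n] U ⊆ U) (p : ℕ) :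
    strictOmegaRel f U ⊆ orbitTail f U p := fun _ hx ↦
  iterate_relImage_subset_orbitTail le_rfl <| iterate_relImage_monotone f p
    (closure_orbitTail_subset hU hN le_rfl) (closure_orbitTail_add_subset hf U N p
      (mem_iInter.1 hx (N + p)))

theorem iterate_relImage_strictOmegaRel_subset (hf : IsClosed f) (hU : IsClosed U)
    (hN : ∀ n, N ≤ n → (RelImage f)^[n] U ⊆ U) (j : ℕ) :
    (RelImage f)^[j] (strictOmegaRel f U) ⊆ strictOmegaRel f U := by
  refine iterate_relImage_subset_of_le (S := strictOmegaRel f U) ?_ Subset.rfl (Nat.zero_le j)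
  refine fun y hy ↦ mem_iInter.2 fun m ↦ subset_closure (orbitTail_antitone (Nat.le_succ m) ?_)
  rw [← relImage_orbitTail]
  exact relImage_monotone f (strictOmegaRel_subset_orbitTail hf hU hN m) hy

theorem omegaRel_subset_strictOmegaRel (hf : IsClosed f) (hU : IsClosed U)
    (hN : ∀ n, N ≤ n → (RelImage f)^[n] U ⊆ U) : omegaRel f U ⊆ strictOmegaRel f U := by
  intro x hx
  refine mem_iInter.2 fun p ↦ ?_
  by_contra hxp
  set C := fun M ↦ closure (orbitTail f U M)
  have hLow : ∀ᶠ M in atTop, ∃ j ∈ Finset.range p, x ∈ (RelImage f)^[j] (C M) := by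
    filter_upwards [eventually_ge_atTop N] with M hM
    obtain ⟨j, -, hxj⟩ := mem_iUnion₂.1
      (mem_sInter.1 hx _ (biUnion_iterate_closure_orbitTail_mem_kSetRel hf hU hN hM))
    refine ⟨j, Finset.mem_range.2 (not_le.1 fun hpj ↦ hxp ?_), hxj⟩
    exact subset_closure (iterate_relImage_subset_orbitTail hpj
      (iterate_relImage_monotone f j (closure_orbitTail_subset hU hN hM) hxj))
  obtain ⟨j, -, hFreq⟩ := (Finset.frequently_exists _).1 hLow.frequently
  have hCanti : Antitone C := fun _ _ h ↦ closure_mono (orbitTail_antitone h)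
  have hxj : x ∈ (RelImage f)^[j] (strictOmegaRel f U) :=
    iInter_iterate_relImage_subset hf j hCanti (fun _ ↦ isClosed_closure)
      (mem_iInter_of_frequently_of_antitone (fun _ _ h ↦ iterate_relImage_monotone f j
        (hCanti h)) hFreq)
  exact hxp (mem_iInter.1 (iterate_relImage_strictOmegaRel_subset hf hU hN j hxj) p)

end Confining

end

theorem stmt8_general {X : Type*} [TopologicalSpace X] [CompactSpace X]
    (f : Set (X × X)) (hf : IsClosed f) (U : Set X) (hU : IsClosed U)
    (N : ℕ) (hN : ∀ n, N ≤ n → (RelImage f)^[n] U ⊆ U) :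
    strictOmegaRel f U = omegaRel f U :=
  strictOmegaRel_subset_omegaRel.antisymm (omegaRel_subset_strictOmegaRel hf hU hN)

theorem stmt8 {X : Type*} [TopologicalSpace X] [CompactSpace X] [T2Space X]
    (f : Set (X × X)) (hf : IsClosed f) (U : Set X) (hU : IsClosed U)
    (N : ℕ) (hN : ∀ n, N ≤ n → (RelImage f)^[n] U ⊆ U) :
    strictOmegaRel f U = omegaRel f U :=
  stmt8_general f hf U hU N hN
end

section
/- Let Φ be a multiflow on a compact space X and B a closed eventually confining set with Φᵗ(B) ⊆ B for all t ≥ T. Then K = ⋂_{s∈[0,T]} Φˢ(B) is a member of 𝔎(B;Φ): it is closed, confining for Φ (Φᵗ(K) ⊆ K for all t ≥ 0), and contains Φ^{2T}(B). -/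
open Set

/-- Composition of relations: `RelComp f g` is `f ∘ g` (apply `g` first). -/
def RelComp {X : Type*} (f g : Set (X × X)) : Set (X × X) :=
  {p | ∃ z, (p.1, z) ∈ g ∧ (z, p.2) ∈ f}

/-- The fixed-time relation `Φᵗ` of a multiflow `Φ ⊆ [0,∞) × X × X`. -/
def MFt {X : Type*} (Φ : Set (ℝ × X × X)) (t : ℝ) : Set (X × X) :=
  {p | (t, p.1, p.2) ∈ Φ}

/-- `Φ` is a multiflow: it lives over nonnegative times, `Φ⁰` is the identity
relation, and `Φ^{s+t} = Φˢ ∘ Φᵗ`. (Closedness of `Φ` is stated separately.) -/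
def IsMultiflow {X : Type*} (Φ : Set (ℝ × X × X)) : Prop :=
  (∀ p ∈ Φ, 0 ≤ p.1) ∧
  MFt Φ 0 = {p | p.2 = p.1} ∧
  ∀ s t : ℝ, 0 ≤ s → 0 ≤ t → MFt Φ (s + t) = RelComp (MFt Φ s) (MFt Φ t)

/-- The collection `𝔎(U;Φ)`: closed sets confining for `Φ` containing some forward image
of `U`. -/
def KSetMF {X : Type*} [TopologicalSpace X] (Φ : Set (ℝ × X × X)) (U : Set X) :
    Set (Set X) :=
  {K | IsClosed K ∧ (∀ t : ℝ, 0 < t → RelImage (MFt Φ t) K ⊆ K) ∧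
    ∃ t : ℝ, 0 < t ∧ RelImage (MFt Φ t) U ⊆ K}

lemma relImage_mono {X : Type*} (f : Set (X × X)) {S S' : Set X} (h : S ⊆ S') :
    RelImage f S ⊆ RelImage f S' := fun _ ⟨x, hx, hxy⟩ => ⟨x, h hx, hxy⟩

lemma relImage_add {X : Type*} {Φ : Set (ℝ × X × X)} (hΦ : IsMultiflow Φ)
    {a b : ℝ} (ha : 0 ≤ a) (hb : 0 ≤ b) (S : Set X) :
    RelImage (MFt Φ (a + b)) S = RelImage (MFt Φ a) (RelImage (MFt Φ b) S) := by
  rw [hΦ.2.2 a b ha hb]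
  ext y
  constructor
  · rintro ⟨x, hx, z, hz1, hz2⟩
    exact ⟨z, ⟨x, hx, hz1⟩, hz2⟩
  · rintro ⟨z, ⟨x, hx, hz1⟩, hz2⟩
    exact ⟨x, hx, z, hz1, hz2⟩

lemma relImage_closed {X : Type*} [TopologicalSpace X] [CompactSpace X]
    {f : Set (X × X)} (hf : IsClosed f) {B : Set X} (hB : IsClosed B) :
    IsClosed (RelImage f B) := by
  have h : RelImage f B = Prod.snd '' ((B ×ˢ (univ : Set X)) ∩ f) := by
    ext y; constructor
    · rintro ⟨x, hx, hxy⟩; exact ⟨(x, y), ⟨⟨hx, trivial⟩, hxy⟩, rfl⟩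
    · rintro ⟨⟨x, y'⟩, ⟨⟨hx, -⟩, hxy⟩, rfl⟩; exact ⟨x, hx, hxy⟩
  rw [h]
  exact isClosedMap_snd_of_compactSpace _ ((hB.prod isClosed_univ).inter hf)

lemma mft_closed {X : Type*} [TopologicalSpace X]
    {Φ : Set (ℝ × X × X)} (hcl : IsClosed Φ) (t : ℝ) : IsClosed (MFt Φ t) := by
  have : MFt Φ t = (fun p : X × X => (t, p.1, p.2)) ⁻¹' Φ := rfl
  rw [this]
  exact hcl.preimage (by fun_prop)

theorem stmt15 {X : Type*} [TopologicalSpace X] [CompactSpace X]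
    (Φ : Set (ℝ × X × X)) (hcl : IsClosed Φ) (hΦ : IsMultiflow Φ)
    (B : Set X) (hB : IsClosed B) (T : ℝ)
    (hT : ∀ t, T ≤ t → RelImage (MFt Φ t) B ⊆ B) :
    (⋂ s ∈ Icc (0 : ℝ) T, RelImage (MFt Φ s) B) ∈ KSetMF Φ B ∧
    IsClosed (⋂ s ∈ Icc (0 : ℝ) T, RelImage (MFt Φ s) B) ∧
    (∀ t : ℝ, 0 ≤ t → RelImage (MFt Φ t) (⋂ s ∈ Icc (0 : ℝ) T, RelImage (MFt Φ s) B) ⊆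
      ⋂ s ∈ Icc (0 : ℝ) T, RelImage (MFt Φ s) B) ∧
    RelImage (MFt Φ (2 * T)) B ⊆ ⋂ s ∈ Icc (0 : ℝ) T, RelImage (MFt Φ s) B := by
  set K := ⋂ s ∈ Icc (0 : ℝ) T, RelImage (MFt Φ s) B with hK
  -- key absorption claim
  have hC : ∀ s : ℝ, 0 ≤ s → s ≤ T → ∀ u : ℝ, T + s ≤ u →
      RelImage (MFt Φ u) B ⊆ RelImage (MFt Φ s) B := by
    intro s hs0 hsT u hu
    have hT0 : 0 ≤ T := le_trans hs0 hsT
    have hus : u = s + (u - s) := by ring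
    have h1 : T ≤ u - s := by linarith
    have h2 : 0 ≤ u - s := le_trans hT0 h1
    rw [hus, relImage_add hΦ hs0 h2]
    exact relImage_mono _ (hT _ h1)
  have hKclosed : IsClosed K := by
    apply isClosed_biInter
    intro s _
    exact relImage_closed (mft_closed hcl s) hB
  have hconf : ∀ t : ℝ, 0 ≤ t → RelImage (MFt Φ t) K ⊆ K := by
    intro t ht
    intro y hy
    obtain ⟨x, hxK, hxy⟩ := hy
    simp only [hK, mem_iInter] at hxK ⊢
    intro s hs
    obtain ⟨hs0, hsT⟩ := hs
    by_cases hts : t ≤ s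
    · have hst : s = t + (s - t) := by ring
      have h0 : 0 ≤ s - t := by linarith
      rw [hst, relImage_add hΦ ht h0]
      exact ⟨x, hxK (s - t) ⟨h0, by linarith⟩, hxy⟩
    · have hT0 : 0 ≤ T := le_trans hs0 hsT
      have hxT : x ∈ RelImage (MFt Φ T) B := hxK T ⟨hT0, le_refl T⟩
      have hy2 : y ∈ RelImage (MFt Φ (t + T)) B := by
        rw [relImage_add hΦ ht hT0]
        exact ⟨x, hxT, hxy⟩
      exact hC s hs0 hsT (t + T) (by linarith) hy2
  have h2T : RelImage (MFt Φ (2 * T)) B ⊆ K := by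
    intro y hy
    simp only [hK, mem_iInter]
    intro s hs
    exact hC s hs.1 hs.2 (2 * T) (by linarith [hs.1, hs.2]) hy
  refine ⟨⟨hKclosed, fun t ht => hconf t ht.le, ?_⟩, hKclosed, hconf, h2T⟩
  by_cases hT0 : 0 ≤ T
  · refine ⟨2 * T + 1, by linarith, ?_⟩
    intro y hy
    simp only [hK, mem_iInter]
    intro s hs
    exact hC s hs.1 hs.2 (2 * T + 1) (by linarith [hs.2]) hy
  · refine ⟨1, one_pos, ?_⟩
    intro y hy
    simp only [hK, mem_iInter]
    intro s hs
    exact absurd (le_trans hs.1 hs.2) hT0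
end
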